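/- With the standing setup for the time-weighted LP trajectory metric, let X, Z, Y be indexed families of trajectories of sizes nX, nZ, nY. For each k = 1,…,T, let A^k be an (nX+1)×(nZ+1) matrix and B^k an (nZ+1)×(nY+1) matrix satisfying the relaxed assignment constraints, and let W^k be their composition: W^k(i,j) = Σ_{l=1}^{nZ} A^k(i,l)B^k(l,j) for i ≤ nX, j ≤ nY, with last row/column completed so that W^k satisfies the relaxed assignment constraints and W^k(nX+1, nY+1) = 0. Then the objective satisfies the triangle inequality c(X, Y, W^{1:T}) ≤ c(X, Z, A^{1:T}) + c(Z, Y, B^{1:T}). -/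

import Mathlib

open Finset

noncomputable section

/-- The GOSPA base distance on `Option E`. -/
def dG {E : Type*} [MetricSpace E] (c p : ℝ) : Option E → Option E → ℝ
  | some x, some y => min c (dist x y)
  | none, none => 0
  | _, _ => c / 2 ^ (1 / p)

/-- Relaxed assignment constraints for a soft-assignment matrix. -/
def Relaxed {m n : ℕ} (W : Matrix (Fin (m + 1)) (Fin (n + 1)) ℝ) : Prop :=
  (∀ i j, 0 ≤ W i j) ∧
  (∀ j : Fin n, ∑ i, W i j.castSucc = 1) ∧
  (∀ i : Fin m, ∑ j, W i.castSucc j = 1) ∧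
  W (Fin.last m) (Fin.last n) = 0

/-- A matrix is binary if every entry is `0` or `1`. -/
def IsBinary {m n : ℕ} (W : Matrix (Fin (m + 1)) (Fin (n + 1)) ℝ) : Prop :=
  ∀ i j, W i j = 0 ∨ W i j = 1

/-- Extend an indexed family of trajectories with an extra all-`none` trajectory. -/
def extTraj {E : Type*} {T n : ℕ} (X : Fin n → Fin T → Option E) :
    Fin (n + 1) → Fin T → Option E :=
  fun i => if h : (i : ℕ) < n then X ⟨i, h⟩ else fun _ => none

/-- The matrix `D^k_{X,Y}(i,j) = dG(X_i(k), Y_j(k))^p` of localisation costs at time `k`. -/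
def Dmat {E : Type*} [MetricSpace E] (c p : ℝ) {T nX nY : ℕ}
    (X : Fin nX → Fin T → Option E) (Y : Fin nY → Fin T → Option E) (k : Fin T) :
    Matrix (Fin (nX + 1)) (Fin (nY + 1)) ℝ :=
  fun i j => dG c p (extTraj X i k) (extTraj Y j k) ^ p

/-- The objective of the time-weighted LP trajectory metric for a sequence of
soft-assignment matrices `W`. -/
def obj {E : Type*} [MetricSpace E] (c p γ : ℝ) (w1 w2 : ℕ → ℝ) {T nX nY : ℕ}
    (X : Fin nX → Fin T → Option E) (Y : Fin nY → Fin T → Option E)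
    (W : Fin T → Matrix (Fin (nX + 1)) (Fin (nY + 1)) ℝ) : ℝ :=
  (∑ k : Fin T, w1 k.1 * ∑ i, ∑ j, Dmat c p X Y k i j * W k i j +
      γ ^ p / 2 * ∑ k : Fin (T - 1), w2 k.1 *
        ∑ i : Fin nX, ∑ j : Fin nY,
          |W ⟨k.1, by have := k.2; omega⟩ i.castSucc j.castSucc -
            W ⟨k.1 + 1, by have := k.2; omega⟩ i.castSucc j.castSucc|) ^ (1 / p)

/-- The time-weighted LP trajectory metric: infimum of the objective over all sequences of
matrices satisfying the relaxed assignment constraints. -/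
def dbar {E : Type*} [MetricSpace E] (c p γ : ℝ) (w1 w2 : ℕ → ℝ) {T nX nY : ℕ}
    (X : Fin nX → Fin T → Option E) (Y : Fin nY → Fin T → Option E) : ℝ :=
  ⨅ W : {W : Fin T → Matrix (Fin (nX + 1)) (Fin (nY + 1)) ℝ // ∀ k, Relaxed (W k)},
    obj c p γ w1 w2 X Y W.1

/-- The time-weighted multi-dimensional assignment metric: infimum of the objective over all
sequences of binary matrices satisfying the relaxed assignment constraints. -/
def dmd {E : Type*} [MetricSpace E] (c p γ : ℝ) (w1 w2 : ℕ → ℝ) {T nX nY : ℕ}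
    (X : Fin nX → Fin T → Option E) (Y : Fin nY → Fin T → Option E) : ℝ :=
  ⨅ W : {W : Fin T → Matrix (Fin (nX + 1)) (Fin (nY + 1)) ℝ //
      ∀ k, Relaxed (W k) ∧ IsBinary (W k)},
    obj c p γ w1 w2 X Y W.1

/-- Composition of soft-assignment matrices, with last row/column completed. -/
def compW {nX nZ nY : ℕ} (A : Matrix (Fin (nX + 1)) (Fin (nZ + 1)) ℝ)
    (B : Matrix (Fin (nZ + 1)) (Fin (nY + 1)) ℝ) :
    Matrix (Fin (nX + 1)) (Fin (nY + 1)) ℝ :=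
  fun i j =>
    if _hi : (i : ℕ) < nX then
      if _hj : (j : ℕ) < nY then ∑ l : Fin nZ, A i l.castSucc * B l.castSucc j
      else 1 - ∑ j' : Fin nY, ∑ l : Fin nZ, A i l.castSucc * B l.castSucc j'.castSucc
    else
      if _hj : (j : ℕ) < nY then
        1 - ∑ i' : Fin nX, ∑ l : Fin nZ, A i'.castSucc l.castSucc * B l.castSucc j
      else 0

/-!
The localisation and switching parts of the objective are bounded separately, each in the form
`a ^ (1 / p) ≤ b ^ (1 / p) + c ^ (1 / p)`, and Minkowski's inequality recombines the two bounds.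

For the localisation part, `A^k` and `B^k` are glued into a three-index coupling whose marginals
are `A^k`, `B^k` and `W^k`, except at the dummy corner where the base costs vanish. In the
weighted `ℓ^p` space of this coupling the localisation costs of `A` and `B` are `‖f‖^p` and
`‖g‖^p`, and by the triangle inequality for `d_G` that of `W` is at most `‖f + g‖^p`.

For the switching part, entrywise `|a b - a' b'| ≤ |a - a'| b + a' |b - b'|`; the rows of `B^k`
and the columns of `A^{k+1}` restricted to real objects sum to at most one, so the switching cost
of `W` is at most that of `A` plus that of `B`, and `x ↦ x ^ (1 / p)` is subadditive.
-/

theorem Real.rpow_one_div_sum_le_add {ι : Type*} (s : Finset ι) {p : ℝ} (hp : 1 ≤ p)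
    {a b c : ι → ℝ} (ha : ∀ i ∈ s, 0 ≤ a i) (hb : ∀ i ∈ s, 0 ≤ b i) (hc : ∀ i ∈ s, 0 ≤ c i)
    (h : ∀ i ∈ s, a i ^ (1 / p) ≤ b i ^ (1 / p) + c i ^ (1 / p)) :
    (∑ i ∈ s, a i) ^ (1 / p) ≤ (∑ i ∈ s, b i) ^ (1 / p) + (∑ i ∈ s, c i) ^ (1 / p) := by
  have hp0 : p ≠ 0 := (zero_lt_one.trans_le hp).ne'
  have hroot : ∀ x : ℝ, 0 ≤ x → (x ^ (1 / p)) ^ p = x := fun x hx => by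
    rw [one_div, Real.rpow_inv_rpow hx hp0]
  have hle : ∑ i ∈ s, a i ≤ ∑ i ∈ s, (b i ^ (1 / p) + c i ^ (1 / p)) ^ p :=
    sum_le_sum fun i hi => hroot (a i) (ha i hi) ▸
      Real.rpow_le_rpow (Real.rpow_nonneg (ha i hi) _) (h i hi) (zero_le_one.trans hp)
  calc (∑ i ∈ s, a i) ^ (1 / p)
      ≤ (∑ i ∈ s, (b i ^ (1 / p) + c i ^ (1 / p)) ^ p) ^ (1 / p) :=
        Real.rpow_le_rpow (sum_nonneg ha) hle (by positivity)
    _ ≤ (∑ i ∈ s, (b i ^ (1 / p)) ^ p) ^ (1 / p) + (∑ i ∈ s, (c i ^ (1 / p)) ^ p) ^ (1 / p) :=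
        Real.Lp_add_le_of_nonneg s hp (fun i hi => Real.rpow_nonneg (hb i hi) _)
          (fun i hi => Real.rpow_nonneg (hc i hi) _)
    _ = (∑ i ∈ s, b i) ^ (1 / p) + (∑ i ∈ s, c i) ^ (1 / p) := by
        rw [sum_congr rfl fun i hi => hroot (b i) (hb i hi),
          sum_congr rfl fun i hi => hroot (c i) (hc i hi)]

theorem Real.rpow_one_div_add_le_add {p : ℝ} (hp : 1 ≤ p) {a₁ a₂ b₁ b₂ c₁ c₂ : ℝ}
    (ha₁ : 0 ≤ a₁) (ha₂ : 0 ≤ a₂) (hb₁ : 0 ≤ b₁) (hb₂ : 0 ≤ b₂) (hc₁ : 0 ≤ c₁) (hc₂ : 0 ≤ c₂)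
    (h₁ : a₁ ^ (1 / p) ≤ b₁ ^ (1 / p) + c₁ ^ (1 / p))
    (h₂ : a₂ ^ (1 / p) ≤ b₂ ^ (1 / p) + c₂ ^ (1 / p)) :
    (a₁ + a₂) ^ (1 / p) ≤ (b₁ + b₂) ^ (1 / p) + (c₁ + c₂) ^ (1 / p) := by
  have key := Real.rpow_one_div_sum_le_add univ hp (a := ![a₁, a₂]) (b := ![b₁, b₂])
    (c := ![c₁, c₂]) (by simp [Fin.forall_fin_two, *]) (by simp [Fin.forall_fin_two, *])
    (by simp [Fin.forall_fin_two, *])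
    (by simp only [mem_univ, forall_const, Fin.forall_fin_two]; exact ⟨h₁, h₂⟩)
  simpa only [Fin.sum_univ_two, Matrix.cons_val_zero, Matrix.cons_val_one] using key

theorem Real.mul_rpow_one_div_le_add {p μ x y z : ℝ} (hp : 0 < p) (hμ : 0 ≤ μ) (hx : 0 ≤ x)
    (hy : 0 ≤ y) (hz : 0 ≤ z) (h : x ≤ y + z) :
    (μ * x ^ p) ^ (1 / p) ≤ (μ * y ^ p) ^ (1 / p) + (μ * z ^ p) ^ (1 / p) := by
  have hroot : ∀ t : ℝ, 0 ≤ t → (μ * t ^ p) ^ (1 / p) = μ ^ (1 / p) * t := fun t ht => by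
    rw [Real.mul_rpow hμ (by positivity), one_div, Real.rpow_rpow_inv ht hp.ne']
  rw [hroot x hx, hroot y hy, hroot z hz, ← mul_add]
  exact mul_le_mul_of_nonneg_left h (by positivity)

theorem abs_mul_sub_mul_le {a a' b b' : ℝ} (hb : 0 ≤ b) (ha' : 0 ≤ a') :
    |a * b - a' * b'| ≤ |a - a'| * b + a' * |b - b'| :=
  calc |a * b - a' * b'| = |(a - a') * b + a' * (b - b')| := by ring_nf
    _ ≤ |(a - a') * b| + |a' * (b - b')| := abs_add_le _ _
    _ = |a - a'| * b + a' * |b - b'| := by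
      rw [abs_mul, abs_mul, abs_of_nonneg hb, abs_of_nonneg ha']

theorem min_dist_triangle {E : Type*} [PseudoMetricSpace E] {c : ℝ} (hc : 0 ≤ c) (x y z : E) :
    min c (dist x z) ≤ min c (dist x y) + min c (dist y z) := by
  rcases le_total c (dist x y) with hxy | hxy
  · rw [min_eq_left hxy]
    exact (min_le_left _ _).trans (le_add_of_nonneg_right (le_min hc dist_nonneg))
  rcases le_total c (dist y z) with hyz | hyz
  · rw [min_eq_left hyz]
    exact (min_le_left _ _).trans (le_add_of_nonneg_left (le_min hc dist_nonneg))
  rw [min_eq_right hxy, min_eq_right hyz]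
  exact (min_le_right _ _).trans (dist_triangle x y z)

section BaseDistance

variable {E : Type*} [MetricSpace E] {c p : ℝ}

theorem dG_nonneg (hc : 0 ≤ c) (x y : Option E) : 0 ≤ dG c p x y := by
  rcases x with _ | x <;> rcases y with _ | y <;> simp only [dG] <;> positivity

theorem dG_triangle (hc : 0 ≤ c) (hp : 1 ≤ p) (x y z : Option E) :
    dG c p x z ≤ dG c p x y + dG c p y z := by
  have hmin : ∀ a b : E, 0 ≤ min c (dist a b) := fun a b => le_min hc dist_nonneg
  have hhalf : 0 ≤ c / 2 ^ (1 / p) := by positivity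
  have htwo : c ≤ c / 2 ^ (1 / p) + c / 2 ^ (1 / p) := by
    have h2 : (2 : ℝ) ^ (1 / p) ≤ 2 ^ (1 : ℝ) :=
      Real.rpow_le_rpow_of_exponent_le one_le_two
        ((div_le_one (zero_lt_one.trans_le hp)).2 hp)
    rw [← add_div, le_div_iff₀ (by positivity)]
    nlinarith [Real.rpow_one (2 : ℝ)]
  rcases x with _ | x <;> rcases y with _ | y <;> rcases z with _ | z <;> simp only [dG]
  · simp
  · simp
  · exact add_nonneg hhalf hhalf
  · exact le_add_of_nonneg_right (hmin y z)
  · simp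
  · exact (min_le_left _ _).trans htwo
  · exact le_add_of_nonneg_left (hmin x y)
  · exact min_dist_triangle hc x y z

theorem Dmat_nonneg (hc : 0 ≤ c) {T nX nY : ℕ} (X : Fin nX → Fin T → Option E)
    (Y : Fin nY → Fin T → Option E) (k : Fin T) (i : Fin (nX + 1)) (j : Fin (nY + 1)) :
    0 ≤ Dmat c p X Y k i j :=
  Real.rpow_nonneg (dG_nonneg hc _ _) _

theorem Dmat_last_last (hp : p ≠ 0) {T nX nY : ℕ} (X : Fin nX → Fin T → Option E)
    (Y : Fin nY → Fin T → Option E) (k : Fin T) :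
    Dmat c p X Y k (Fin.last nX) (Fin.last nY) = 0 := by
  simp [Dmat, extTraj, dG, Real.zero_rpow hp]

end BaseDistance

section Assignment

variable {m n : ℕ} {W : Matrix (Fin (m + 1)) (Fin (n + 1)) ℝ}

theorem Relaxed.nonneg (hW : Relaxed W) (i : Fin (m + 1)) (j : Fin (n + 1)) : 0 ≤ W i j :=
  hW.1 i j

theorem Relaxed.sum_col (hW : Relaxed W) (j : Fin n) : ∑ i, W i j.castSucc = 1 :=
  hW.2.1 j

theorem Relaxed.sum_row (hW : Relaxed W) (i : Fin m) : ∑ j, W i.castSucc j = 1 :=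
  hW.2.2.1 i

theorem Relaxed.sum_col_castSucc_le_one (hW : Relaxed W) (j : Fin n) :
    ∑ i : Fin m, W i.castSucc j.castSucc ≤ 1 := by
  rw [← hW.sum_col j, Fin.sum_univ_castSucc]
  exact le_add_of_nonneg_right (hW.nonneg _ _)

theorem Relaxed.sum_row_castSucc_le_one (hW : Relaxed W) (i : Fin m) :
    ∑ j : Fin n, W i.castSucc j.castSucc ≤ 1 := by
  rw [← hW.sum_row i, Fin.sum_univ_castSucc]
  exact le_add_of_nonneg_right (hW.nonneg _ _)

end Assignment

section Composition

variable {nX nZ nY : ℕ} {A : Matrix (Fin (nX + 1)) (Fin (nZ + 1)) ℝ}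
  {B : Matrix (Fin (nZ + 1)) (Fin (nY + 1)) ℝ}

@[simp]
theorem compW_castSucc_castSucc (i : Fin nX) (j : Fin nY) :
    compW A B i.castSucc j.castSucc =
      ∑ l : Fin nZ, A i.castSucc l.castSucc * B l.castSucc j.castSucc := by
  simp [compW]

theorem compW_castSucc_last (i : Fin nX) :
    compW A B i.castSucc (Fin.last nY) = 1 - ∑ j : Fin nY, compW A B i.castSucc j.castSucc := by
  simp [compW]

theorem compW_last_castSucc (j : Fin nY) :
    compW A B (Fin.last nX) j.castSucc = 1 - ∑ i : Fin nX, compW A B i.castSucc j.castSucc := by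
  simp [compW]

/-- A coupling of `A` and `B` along the middle index, with the dummy row and column of `compW`
routed through the dummy middle index. -/
def glue (A : Matrix (Fin (nX + 1)) (Fin (nZ + 1)) ℝ) (B : Matrix (Fin (nZ + 1)) (Fin (nY + 1)) ℝ)
    (i : Fin (nX + 1)) (l : Fin (nZ + 1)) (j : Fin (nY + 1)) : ℝ :=
  if l = Fin.last nZ then
    if j = Fin.last nY then A i l else if i = Fin.last nX then B l j else 0
  else A i l * B l j

theorem glue_nonneg (hA : Relaxed A) (hB : Relaxed B) (i l j) : 0 ≤ glue A B i l j := by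
  unfold glue
  split_ifs
  exacts [hA.nonneg _ _, hB.nonneg _ _, le_rfl, mul_nonneg (hA.nonneg _ _) (hB.nonneg _ _)]

theorem sum_glue_right (hB : Relaxed B) {i : Fin (nX + 1)} {l : Fin (nZ + 1)}
    (hil : i ≠ Fin.last nX ∨ l ≠ Fin.last nZ) : ∑ j, glue A B i l j = A i l := by
  induction l using Fin.lastCases with
  | last =>
    have hi : i ≠ Fin.last nX := by simpa using hil
    simp [glue, hi]
  | cast l => simp [glue, ← mul_sum, hB.sum_row l]

theorem sum_glue_left (hA : Relaxed A) {l : Fin (nZ + 1)} {j : Fin (nY + 1)}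
    (hlj : l ≠ Fin.last nZ ∨ j ≠ Fin.last nY) : ∑ i, glue A B i l j = B l j := by
  induction l using Fin.lastCases with
  | last =>
    have hj : j ≠ Fin.last nY := by simpa using hlj
    simp [glue, hj]
  | cast l => simp [glue, ← sum_mul, hA.sum_col l]

theorem sum_glue_right_mul (hB : Relaxed B) {v : Matrix (Fin (nX + 1)) (Fin (nZ + 1)) ℝ}
    (hv : v (Fin.last nX) (Fin.last nZ) = 0) (i : Fin (nX + 1)) (l : Fin (nZ + 1)) :
    (∑ j, glue A B i l j) * v i l = A i l * v i l := by
  by_cases hil : i = Fin.last nX ∧ l = Fin.last nZ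
  · obtain ⟨rfl, rfl⟩ := hil
    simp [hv]
  · rw [sum_glue_right hB (not_and_or.1 hil)]

theorem sum_glue_left_mul (hA : Relaxed A) {v : Matrix (Fin (nZ + 1)) (Fin (nY + 1)) ℝ}
    (hv : v (Fin.last nZ) (Fin.last nY) = 0) (l : Fin (nZ + 1)) (j : Fin (nY + 1)) :
    (∑ i, glue A B i l j) * v l j = B l j * v l j := by
  by_cases hlj : l = Fin.last nZ ∧ j = Fin.last nY
  · obtain ⟨rfl, rfl⟩ := hlj
    simp [hv]
  · rw [sum_glue_left hA (not_and_or.1 hlj)]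

theorem sum_glue_middle (hA : Relaxed A) (hB : Relaxed B) {i : Fin (nX + 1)} {j : Fin (nY + 1)}
    (hij : i ≠ Fin.last nX ∨ j ≠ Fin.last nY) : ∑ l, glue A B i l j = compW A B i j := by
  have inner : ∀ (i : Fin nX) (j : Fin nY),
      ∑ l, glue A B i.castSucc l j.castSucc = compW A B i.castSucc j.castSucc := by
    intro i j
    simp [glue, Fin.sum_univ_castSucc]
  -- the dummy row and column are forced by the row and column sums of the coupling
  induction i using Fin.lastCases with
  | cast i =>
    induction j using Fin.lastCases with
    | cast j => exact inner i j
    | last =>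
      have htotal : ∑ j, ∑ l, glue A B i.castSucc l j = 1 := by
        rw [sum_comm, ← hA.sum_row i]
        exact sum_congr rfl fun l _ => sum_glue_right hB (.inl (Fin.castSucc_ne_last i))
      rw [Fin.sum_univ_castSucc] at htotal
      simp only [inner] at htotal
      rw [compW_castSucc_last]
      linarith
  | last =>
    induction j using Fin.lastCases with
    | last => simp at hij
    | cast j =>
      have htotal : ∑ i, ∑ l, glue A B i l j.castSucc = 1 := by
        rw [sum_comm, ← hB.sum_col j]
        exact sum_congr rfl fun l _ => sum_glue_left hA (.inr (Fin.castSucc_ne_last j))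
      rw [Fin.sum_univ_castSucc] at htotal
      simp only [inner] at htotal
      rw [compW_last_castSucc]
      linarith

theorem compW_nonneg (hA : Relaxed A) (hB : Relaxed B) (i j) : 0 ≤ compW A B i j := by
  by_cases hij : i = Fin.last nX ∧ j = Fin.last nY
  · obtain ⟨rfl, rfl⟩ := hij
    simp [compW]
  · rw [← sum_glue_middle hA hB (not_and_or.1 hij)]
    exact sum_nonneg fun l _ => glue_nonneg hA hB i l j

theorem compW_le_sum_glue (hA : Relaxed A) (hB : Relaxed B) (i j) :
    compW A B i j ≤ ∑ l, glue A B i l j := by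
  by_cases hij : i = Fin.last nX ∧ j = Fin.last nY
  · obtain ⟨rfl, rfl⟩ := hij
    simpa [compW] using sum_nonneg fun l _ => glue_nonneg hA hB (Fin.last nX) l (Fin.last nY)
  · exact (sum_glue_middle hA hB (not_and_or.1 hij)).ge

end Composition

def switchDist {m n : ℕ} (W W' : Matrix (Fin (m + 1)) (Fin (n + 1)) ℝ) : ℝ :=
  ∑ i : Fin m, ∑ j : Fin n, |W i.castSucc j.castSucc - W' i.castSucc j.castSucc|

theorem switchDist_nonneg {m n : ℕ} (W W' : Matrix (Fin (m + 1)) (Fin (n + 1)) ℝ) :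
    0 ≤ switchDist W W' := by
  unfold switchDist
  positivity

theorem switchDist_compW_le {nX nZ nY : ℕ} {A A' : Matrix (Fin (nX + 1)) (Fin (nZ + 1)) ℝ}
    {B B' : Matrix (Fin (nZ + 1)) (Fin (nY + 1)) ℝ} (hB : Relaxed B) (hA' : Relaxed A') :
    switchDist (compW A B) (compW A' B') ≤ switchDist A A' + switchDist B B' := by
  set dA := fun (i : Fin nX) (l : Fin nZ) => |A i.castSucc l.castSucc - A' i.castSucc l.castSucc|
  set dB := fun (l : Fin nZ) (j : Fin nY) => |B l.castSucc j.castSucc - B' l.castSucc j.castSucc|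
  calc switchDist (compW A B) (compW A' B')
      ≤ ∑ i : Fin nX, ∑ j : Fin nY, ∑ l : Fin nZ,
          (dA i l * B l.castSucc j.castSucc + A' i.castSucc l.castSucc * dB l j) := by
        unfold switchDist
        gcongr with i _ j _
        simp only [compW_castSucc_castSucc, ← sum_sub_distrib]
        exact (abs_sum_le_sum_abs _ _).trans
          (sum_le_sum fun l _ => abs_mul_sub_mul_le (hB.nonneg _ _) (hA'.nonneg _ _))
    _ = ∑ i : Fin nX, ∑ l : Fin nZ, dA i l * ∑ j : Fin nY, B l.castSucc j.castSucc +
          ∑ l : Fin nZ, ∑ j : Fin nY, dB l j * ∑ i : Fin nX, A' i.castSucc l.castSucc := by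
        simp only [sum_add_distrib, mul_sum]
        congr 1
        · exact sum_congr rfl fun i _ => sum_comm
        · rw [sum_comm, sum_congr rfl fun j _ => sum_comm, sum_comm]
          simp only [mul_comm]
    _ ≤ ∑ i : Fin nX, ∑ l : Fin nZ, dA i l * 1 + ∑ l : Fin nZ, ∑ j : Fin nY, dB l j * 1 := by
        gcongr with i _ l _ l _ j _
        exacts [hB.sum_row_castSucc_le_one l, hA'.sum_col_castSucc_le_one l]
    _ = switchDist A A' + switchDist B B' := by simp only [mul_one, switchDist, dA, dB]

section Objective

variable {E : Type*} [MetricSpace E] {c p γ : ℝ} {w1 w2 : ℕ → ℝ} {T nX nZ nY : ℕ}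

def locCost (c p : ℝ) (w1 : ℕ → ℝ) (X : Fin nX → Fin T → Option E)
    (Y : Fin nY → Fin T → Option E) (W : Fin T → Matrix (Fin (nX + 1)) (Fin (nY + 1)) ℝ) : ℝ :=
  ∑ k : Fin T, w1 k.1 * ∑ i, ∑ j, Dmat c p X Y k i j * W k i j

def switchCost (p γ : ℝ) (w2 : ℕ → ℝ) (W : Fin T → Matrix (Fin (nX + 1)) (Fin (nY + 1)) ℝ) :
    ℝ :=
  γ ^ p / 2 * ∑ k : Fin (T - 1), w2 k.1 *
    switchDist (W ⟨k.1, by have := k.2; omega⟩) (W ⟨k.1 + 1, by have := k.2; omega⟩)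

theorem obj_eq (X : Fin nX → Fin T → Option E) (Y : Fin nY → Fin T → Option E)
    (W : Fin T → Matrix (Fin (nX + 1)) (Fin (nY + 1)) ℝ) :
    obj c p γ w1 w2 X Y W = (locCost c p w1 X Y W + switchCost p γ w2 W) ^ (1 / p) :=
  rfl

theorem locCost_nonneg (hc : 0 ≤ c) (hw1 : ∀ k : Fin T, 0 ≤ w1 k) (X : Fin nX → Fin T → Option E)
    (Y : Fin nY → Fin T → Option E) {W : Fin T → Matrix (Fin (nX + 1)) (Fin (nY + 1)) ℝ}
    (hW : ∀ k i j, 0 ≤ W k i j) : 0 ≤ locCost c p w1 X Y W :=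
  sum_nonneg fun k _ => mul_nonneg (hw1 k) <| sum_nonneg fun i _ => sum_nonneg fun j _ =>
    mul_nonneg (Dmat_nonneg hc X Y k i j) (hW k i j)

theorem switchCost_nonneg (hγ : 0 ≤ γ) (hw2 : ∀ k : Fin (T - 1), 0 ≤ w2 k)
    (W : Fin T → Matrix (Fin (nX + 1)) (Fin (nY + 1)) ℝ) : 0 ≤ switchCost p γ w2 W :=
  mul_nonneg (by positivity) <| sum_nonneg fun k _ => mul_nonneg (hw2 k) (switchDist_nonneg _ _)

theorem switchCost_compW_le (hγ : 0 ≤ γ) (hw2 : ∀ k : Fin (T - 1), 0 ≤ w2 k)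
    {A : Fin T → Matrix (Fin (nX + 1)) (Fin (nZ + 1)) ℝ}
    {B : Fin T → Matrix (Fin (nZ + 1)) (Fin (nY + 1)) ℝ}
    (hA : ∀ k, Relaxed (A k)) (hB : ∀ k, Relaxed (B k)) :
    switchCost p γ w2 (fun k => compW (A k) (B k)) ≤ switchCost p γ w2 A + switchCost p γ w2 B := by
  unfold switchCost
  rw [← mul_add, ← sum_add_distrib]
  gcongr with k _
  rw [← mul_add]
  exact mul_le_mul_of_nonneg_left (switchDist_compW_le (hB _) (hA _)) (hw2 k)

theorem switchCost_compW_rpow_le (hp : 1 ≤ p) (hγ : 0 ≤ γ) (hw2 : ∀ k : Fin (T - 1), 0 ≤ w2 k)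
    {A : Fin T → Matrix (Fin (nX + 1)) (Fin (nZ + 1)) ℝ}
    {B : Fin T → Matrix (Fin (nZ + 1)) (Fin (nY + 1)) ℝ}
    (hA : ∀ k, Relaxed (A k)) (hB : ∀ k, Relaxed (B k)) :
    switchCost p γ w2 (fun k => compW (A k) (B k)) ^ (1 / p) ≤
      switchCost p γ w2 A ^ (1 / p) + switchCost p γ w2 B ^ (1 / p) :=
  (Real.rpow_le_rpow (switchCost_nonneg hγ hw2 _) (switchCost_compW_le hγ hw2 hA hB)
    (by positivity)).trans
    (Real.rpow_add_le_add_rpow (switchCost_nonneg hγ hw2 _) (switchCost_nonneg hγ hw2 _)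
      (by positivity) (div_le_one_of_le₀ hp (by positivity)))

theorem locCost_compW_rpow_le (hc : 0 ≤ c) (hp : 1 ≤ p) (hw1 : ∀ k : Fin T, 0 ≤ w1 k)
    (X : Fin nX → Fin T → Option E) (Z : Fin nZ → Fin T → Option E)
    (Y : Fin nY → Fin T → Option E)
    {A : Fin T → Matrix (Fin (nX + 1)) (Fin (nZ + 1)) ℝ}
    {B : Fin T → Matrix (Fin (nZ + 1)) (Fin (nY + 1)) ℝ}
    (hA : ∀ k, Relaxed (A k)) (hB : ∀ k, Relaxed (B k)) :
    locCost c p w1 X Y (fun k => compW (A k) (B k)) ^ (1 / p) ≤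
      locCost c p w1 X Z A ^ (1 / p) + locCost c p w1 Z Y B ^ (1 / p) := by
  have hp0 : 0 < p := zero_lt_one.trans_le hp
  let μ : Fin T × Fin (nX + 1) × Fin (nZ + 1) × Fin (nY + 1) → ℝ :=
    fun q => w1 q.1 * glue (A q.1) (B q.1) q.2.1 q.2.2.1 q.2.2.2
  have hμ : ∀ q, 0 ≤ μ q := fun q => mul_nonneg (hw1 _) (glue_nonneg (hA _) (hB _) _ _ _)
  have hXY : locCost c p w1 X Y (fun k => compW (A k) (B k)) ≤
      ∑ q, μ q * Dmat c p X Y q.1 q.2.1 q.2.2.2 := by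
    calc locCost c p w1 X Y (fun k => compW (A k) (B k))
        ≤ ∑ k : Fin T, w1 k * ∑ i, ∑ j, Dmat c p X Y k i j * ∑ l, glue (A k) (B k) i l j := by
          unfold locCost
          gcongr with k _ i _ j _
          · exact hw1 k
          · exact Dmat_nonneg hc X Y k i j
          · exact compW_le_sum_glue (hA k) (hB k) i j
      _ = ∑ q, μ q * Dmat c p X Y q.1 q.2.1 q.2.2.2 := by
          simp only [μ, Fintype.sum_prod_type, mul_sum]
          refine sum_congr rfl fun k _ => sum_congr rfl fun i _ => ?_
          rw [sum_comm]
          exact sum_congr rfl fun l _ => sum_congr rfl fun j _ => by ring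
  have hXZ : ∑ q, μ q * Dmat c p X Z q.1 q.2.1 q.2.2.1 = locCost c p w1 X Z A := by
    simp only [μ, Fintype.sum_prod_type, locCost, mul_sum]
    refine sum_congr rfl fun k _ => sum_congr rfl fun i _ => sum_congr rfl fun l _ => ?_
    rw [← sum_mul, ← mul_sum, mul_assoc, mul_comm (Dmat _ _ _ _ _ _ _),
      sum_glue_right_mul (hB k) (Dmat_last_last hp0.ne' X Z k)]
  have hZY : ∑ q, μ q * Dmat c p Z Y q.1 q.2.2.1 q.2.2.2 = locCost c p w1 Z Y B := by
    simp only [μ, Fintype.sum_prod_type, locCost, mul_sum]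
    refine sum_congr rfl fun k _ => ?_
    rw [sum_comm]
    refine sum_congr rfl fun l _ => ?_
    rw [sum_comm]
    refine sum_congr rfl fun j _ => ?_
    rw [← sum_mul, ← mul_sum, mul_assoc, mul_comm (Dmat _ _ _ _ _ _ _),
      sum_glue_left_mul (hA k) (Dmat_last_last hp0.ne' Z Y k)]
  rw [← hXZ, ← hZY]
  refine (Real.rpow_le_rpow (locCost_nonneg hc hw1 X Y fun k => compW_nonneg (hA k) (hB k)) hXY
    (by positivity)).trans (Real.rpow_one_div_sum_le_add univ hp (fun q _ => ?_) (fun q _ => ?_)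
      (fun q _ => ?_) fun q _ => ?_)
  any_goals exact mul_nonneg (hμ q) (Dmat_nonneg hc _ _ _ _ _)
  exact Real.mul_rpow_one_div_le_add hp0 (hμ q) (dG_nonneg hc _ _) (dG_nonneg hc _ _)
    (dG_nonneg hc _ _) (dG_triangle hc hp _ _ _)

end Objective

/-- Triangle inequality for the objective of the time-weighted LP trajectory metric:
if `W^k` is the composition of `A^k` and `B^k`, then
`c(X, Y, W^{1:T}) ≤ c(X, Z, A^{1:T}) + c(Z, Y, B^{1:T})`. -/
theorem obj_triangle {E : Type*} [MetricSpace E] {T nX nZ nY : ℕ}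
    (c p γ : ℝ) (hc : 0 < c) (hp : 1 ≤ p) (hγ : 0 < γ)
    (w1 w2 : ℕ → ℝ) (hw1 : ∀ k < T, 0 < w1 k) (hw2 : ∀ k < T - 1, 0 < w2 k)
    (X : Fin nX → Fin T → Option E) (Z : Fin nZ → Fin T → Option E)
    (Y : Fin nY → Fin T → Option E)
    (A : Fin T → Matrix (Fin (nX + 1)) (Fin (nZ + 1)) ℝ)
    (B : Fin T → Matrix (Fin (nZ + 1)) (Fin (nY + 1)) ℝ)
    (hA : ∀ k, Relaxed (A k)) (hB : ∀ k, Relaxed (B k)) :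
    obj c p γ w1 w2 X Y (fun k => compW (A k) (B k)) ≤
      obj c p γ w1 w2 X Z A + obj c p γ w1 w2 Z Y B := by
  have hw1' : ∀ k : Fin T, 0 ≤ w1 k := fun k => (hw1 k k.2).le
  have hw2' : ∀ k : Fin (T - 1), 0 ≤ w2 k := fun k => (hw2 k k.2).le
  simp only [obj_eq]
  exact Real.rpow_one_div_add_le_add hp
    (locCost_nonneg hc.le hw1' X Y fun k => compW_nonneg (hA k) (hB k))
    (switchCost_nonneg hγ.le hw2' _) (locCost_nonneg hc.le hw1' X Z fun k => (hA k).nonneg)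
    (switchCost_nonneg hγ.le hw2' _) (locCost_nonneg hc.le hw1' Z Y fun k => (hB k).nonneg)
    (switchCost_nonneg hγ.le hw2' _) (locCost_compW_rpow_le hc.le hp hw1' X Z Y hA hB)
    (switchCost_compW_rpow_le hp hγ.le hw2' hA hB)
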